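/- Let A be a T-brace and let a ∈ ζ₂(⋆,A) be an element of infinite additive order. Suppose that the torsion subgroup of the additive group of ζ(⋆,A) is a p-group for some prime p. Then a ⋆ a has additive order at most p; in particular p·(a ⋆ a) = 0. -/

import Mathlib

/-!
Basic theory of left braces (skew left braces of abelian type), following
Dixon–Kurdachenko–Subbotin, "On the structure of braces whose subideals are ideals".
-/

universe u v

/-- A left brace: an abelian group `(A,+)`, a group `(A,·)`, satisfying
`a(b+c) = ab + ac - a`.  (The additive and multiplicative identities then coincide.) -/
class LeftBrace (A : Type u) extends AddCommGroup A, Group A where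
  mul_add_eq : ∀ a b c : A, a * (b + c) = a * b + a * c - a

namespace LeftBrace

variable {A : Type u} [LeftBrace A]

/-- The star operation `a ⋆ b = ab - a - b`. -/
def bstar (a b : A) : A := a * b - a - b

/-- A subset of a left brace is a subbrace if it is closed under the additive-group
and multiplicative-group operations (equivalently, it is a left brace under the
restricted operations). -/
structure IsSubbrace (S : Set A) : Prop where
  zero_mem : (0 : A) ∈ S
  add_mem : ∀ {a b : A}, a ∈ S → b ∈ S → a + b ∈ S
  neg_mem : ∀ {a : A}, a ∈ S → -a ∈ S
  mul_mem : ∀ {a b : A}, a ∈ S → b ∈ S → a * b ∈ S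
  inv_mem : ∀ {a : A}, a ∈ S → a⁻¹ ∈ S

/-- `I` is an ideal of the subbrace `J`: `I ⊆ J`, both are subbraces, and
`a ⋆ z, z ⋆ a ∈ I` for all `a ∈ J`, `z ∈ I`. -/
structure IsIdealIn (I J : Set A) : Prop where
  subset : I ⊆ J
  subbrace : IsSubbrace I
  ambient_subbrace : IsSubbrace J
  star_mem_left : ∀ a ∈ J, ∀ z ∈ I, bstar a z ∈ I
  star_mem_right : ∀ a ∈ J, ∀ z ∈ I, bstar z a ∈ I

/-- `I` is an ideal of the brace `A`. -/
def IsIdeal (I : Set A) : Prop := IsIdealIn I (Set.univ : Set A)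

/-- `A` is a T-brace if being an ideal is a transitive relation: an ideal of an
ideal of `A` is an ideal of `A`. -/
def IsTBrace (A : Type u) [LeftBrace A] : Prop :=
  ∀ I J : Set A, IsIdealIn I J → IsIdeal J → IsIdeal I

/-- The `⋆`-center `ζ(⋆,A) = {a | a ⋆ x = x ⋆ a = 0 for all x}`. -/
def starCenter (A : Type u) [LeftBrace A] : Set A :=
  {a : A | ∀ x : A, bstar a x = 0 ∧ bstar x a = 0}

/-- The preimage in `A` of the `⋆`-center of the quotient of `A` by (the ideal) `S`:
`a` belongs to it iff `a ⋆ x ∈ S` and `x ⋆ a ∈ S` for every `x ∈ A`. -/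
def nextCenter (A : Type u) [LeftBrace A] (S : Set A) : Set A :=
  {a : A | ∀ x : A, bstar a x ∈ S ∧ bstar x a ∈ S}

/-- The upper `⋆`-central series, indexed by naturals:
`ζ₀(⋆,A) = 0` and `ζ_{n+1}(⋆,A)/ζ_n(⋆,A) = ζ(⋆, A/ζ_n(⋆,A))`. -/
def zetaNat (A : Type u) [LeftBrace A] : ℕ → Set A
  | 0 => ({0} : Set A)
  | n + 1 => nextCenter A (zetaNat A n)

/-- The upper `⋆`-central series, indexed by ordinals (unions at limit ordinals). -/
noncomputable def zetaOrd (A : Type u) [LeftBrace A] (o : Ordinal.{v}) : Set A :=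
  Ordinal.limitRecOn o (({0} : Set A))
    (fun _ ih => nextCenter A ih)
    (fun o _ ih => ⋃ (o' : Ordinal) (h : o' < o), ih o' h)

/-- The upper `⋆`-hypercenter `ζ_∞(⋆,A)`: the final (stable) term of the upper
`⋆`-central series, i.e. the union of all its terms. -/
noncomputable def starHypercenter (A : Type u) [LeftBrace A] : Set A :=
  ⋃ o : Ordinal.{u}, zetaOrd A o

/-- `A` is `⋆`-hypercentral if `A = ζ_γ(⋆,A)` for some ordinal `γ`. -/
def IsStarHypercentral (A : Type u) [LeftBrace A] : Prop :=
  ∃ γ : Ordinal.{u}, zetaOrd A γ = (Set.univ : Set A)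

/-- `K ⋆ L`: the additive subgroup of `(A,+)` generated by all `x ⋆ y`, `x ∈ K`, `y ∈ L`. -/
def setStar (K L : Set A) : AddSubgroup A :=
  AddSubgroup.closure {z : A | ∃ x ∈ K, ∃ y ∈ L, z = bstar x y}

/-- `rightStarSeries A n = A^{(n+1)}`, where `A^{(1)} = A` and `A^{(n+1)} = A^{(n)} ⋆ A`. -/
def rightStarSeries (A : Type u) [LeftBrace A] : ℕ → Set A
  | 0 => (Set.univ : Set A)
  | n + 1 => ((setStar (rightStarSeries A n) (Set.univ : Set A) : AddSubgroup A) : Set A)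

/-- `leftStarSeries A n = A^{n+1}`, where `A^1 = A` and `A^{n+1} = A ⋆ A^n`. -/
def leftStarSeries (A : Type u) [LeftBrace A] : ℕ → Set A
  | 0 => (Set.univ : Set A)
  | n + 1 => ((setStar (Set.univ : Set A) (leftStarSeries A n) : AddSubgroup A) : Set A)

/-- `A` is Smoktunowicz-nilpotent if `A^{(n)} = A^k = 0` for some naturals `n, k`. -/
def IsSmoktunowiczNilpotent (A : Type u) [LeftBrace A] : Prop :=
  ∃ n k : ℕ, rightStarSeries A n = ({0} : Set A) ∧ leftStarSeries A k = ({0} : Set A)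

/-- The subbrace generated by a subset `M`: the intersection of all subbraces containing `M`. -/
def braceClosure (M : Set A) : Set A := ⋂₀ {S : Set A | IsSubbrace S ∧ M ⊆ S}

end LeftBrace

/-!
Let `b = a ⋆ a`, a `⋆`-central element. For `a ∈ ζ₂(⋆,A)` the operation `⋆` is additive in
both arguments on `ℤa + ζ(⋆,A)`, so `J = ℤ(p a) + ζ(⋆,A)` is an ideal of `A` and
`I = ℤ(p a) + ℤ(p² b)` is an ideal of `J`. By the T-property `I` is an ideal of `A`, hence
`a ⋆ (p a) = p b ∈ I`, i.e. `p b = k p a + n p² b`. Applying `a ⋆ -` gives `k p b = 0`, so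
`(k p)² a = 0` and `k = 0` because `a` has infinite order. Thus `p (1 - n p) b = 0`; as `1 - n p`
is prime to `p` and the torsion of `ζ(⋆,A)` is a `p`-group, `p b = 0`.
-/

namespace LeftBrace

variable {A : Type u} [LeftBrace A]

theorem mul_sub_eq (x u v : A) : x * (u - v) = x * u - x * v + x := by
  have h := mul_add_eq x (u - v) v
  rw [sub_add_cancel] at h
  rw [h]
  abel

theorem mul_zero_eq_self (x : A) : x * 0 = x := by
  simpa using mul_sub_eq x 0 0

theorem one_eq_zero : (1 : A) = 0 := by
  simpa using (mul_zero_eq_self (1 : A)).symm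

theorem zero_mul_eq_self (x : A) : 0 * x = x := by
  rw [← one_eq_zero, one_mul]

theorem mul_eq_bstar_add_add (x y : A) : x * y = bstar x y + x + y := by
  rw [bstar]
  abel

theorem bstar_zero (x : A) : bstar x 0 = 0 := by
  simp [bstar, mul_zero_eq_self]

theorem zero_bstar (x : A) : bstar 0 x = 0 := by
  simp [bstar, zero_mul_eq_self]

theorem bstar_add (x u v : A) : bstar x (u + v) = bstar x u + bstar x v := by
  simp only [bstar, mul_add_eq]
  abel

theorem bstar_neg (x y : A) : bstar x (-y) = -bstar x y :=
  map_neg (AddMonoidHom.mk' (bstar x) (bstar_add x)) y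

theorem bstar_zsmul (x : A) (n : ℤ) (y : A) : bstar x (n • y) = n • bstar x y :=
  map_zsmul (AddMonoidHom.mk' (bstar x) (bstar_add x)) n y

theorem mul_bstar (x y z : A) :
    bstar (x * y) z = bstar x (bstar y z) + bstar y z + bstar x z := by
  simp only [bstar, mul_sub_eq, mul_assoc]
  abel

theorem isSubbrace_univ : IsSubbrace (Set.univ : Set A) :=
  ⟨trivial, fun _ _ ↦ trivial, fun _ ↦ trivial, fun _ _ ↦ trivial, fun _ ↦ trivial⟩

section StarCenter

theorem bstar_eq_zero_left {z : A} (hz : z ∈ starCenter A) (x : A) :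
    bstar z x = 0 :=
  (hz x).1

theorem bstar_eq_zero_right {z : A} (hz : z ∈ starCenter A) (x : A) :
    bstar x z = 0 :=
  (hz x).2

theorem add_eq_mul_of_bstar_eq_zero {x y : A} (h : bstar x y = 0) : x + y = x * y := by
  rw [mul_eq_bstar_add_add, h, zero_add]

variable (A) in
def starCenterSubgroup : AddSubgroup A where
  carrier := starCenter A
  zero_mem' x := ⟨zero_bstar x, bstar_zero x⟩
  add_mem' {z w} hz hw x := by
    refine ⟨?_, by rw [bstar_add, bstar_eq_zero_right hz, bstar_eq_zero_right hw, add_zero]⟩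
    rw [add_eq_mul_of_bstar_eq_zero (bstar_eq_zero_right hw z), mul_bstar,
      bstar_eq_zero_left hw, bstar_zero, bstar_eq_zero_left hz, add_zero, add_zero]
  neg_mem' {z} hz x := by
    refine ⟨?_, by rw [bstar_neg, bstar_eq_zero_right hz, neg_zero]⟩
    have h := mul_bstar (-z) z x
    rwa [← add_eq_mul_of_bstar_eq_zero (bstar_eq_zero_right hz (-z)), neg_add_cancel,
      zero_bstar, bstar_eq_zero_left hz, bstar_zero, zero_add, zero_add, eq_comm] at h

theorem add_bstar_of_mem_starCenter {z : A} (hz : z ∈ starCenter A) (y x : A) :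
    bstar (y + z) x = bstar y x := by
  rw [add_eq_mul_of_bstar_eq_zero (bstar_eq_zero_right hz y), mul_bstar, bstar_eq_zero_left hz,
    bstar_zero, zero_add, zero_add]

theorem add_bstar {x y : A} (h : bstar x y ∈ starCenter A) (w : A) :
    bstar (x + y) w = bstar x (bstar y w) + bstar y w + bstar x w := by
  have hxy : x + y = x * y + -bstar x y := by rw [mul_eq_bstar_add_add]; abel
  rw [hxy, add_bstar_of_mem_starCenter (neg_mem (show _ ∈ starCenterSubgroup A from h)),
    mul_bstar]

end StarCenter

section SecondCenter

theorem add_bstar_of_forall_mem_starCenter {u v : A} (hu : ∀ x, bstar u x ∈ starCenter A)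
    (hv : ∀ x, bstar v x ∈ starCenter A) (x : A) :
    bstar (u + v) x = bstar u x + bstar v x := by
  rw [add_bstar (hu v), bstar_eq_zero_right (hv x), zero_add, add_comm]

theorem neg_bstar_of_forall_mem_starCenter {u : A} (hu : ∀ x, bstar u x ∈ starCenter A)
    (x : A) : bstar (-u) x = -bstar u x := by
  have hinv : bstar u⁻¹ x = -bstar u x := by
    have h := mul_bstar u⁻¹ u x
    rw [inv_mul_cancel, one_eq_zero, zero_bstar, bstar_eq_zero_right (hu x),
      zero_add] at h
    exact eq_neg_of_add_eq_zero_right h.symm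
  have hneg : -u = u⁻¹ + bstar u u⁻¹ := by
    have h := mul_eq_bstar_add_add u u⁻¹
    rw [mul_inv_cancel, one_eq_zero] at h
    rw [neg_eq_iff_add_eq_zero, h]
    abel
  rw [hneg, add_bstar_of_mem_starCenter (hu u⁻¹), hinv]

variable (A) in
def leftStarCenterTwo : AddSubgroup A where
  carrier := {u | ∀ x, bstar u x ∈ starCenter A}
  zero_mem' x := by
    rw [zero_bstar]
    exact (starCenterSubgroup A).zero_mem
  add_mem' {u v} hu hv x := by
    rw [add_bstar_of_forall_mem_starCenter hu hv]
    exact (starCenterSubgroup A).add_mem (hu x) (hv x)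
  neg_mem' {u} hu x := by
    rw [neg_bstar_of_forall_mem_starCenter hu]
    exact (starCenterSubgroup A).neg_mem (hu x)

theorem zsmul_bstar {u : A} (hu : ∀ x, bstar u x ∈ starCenter A) (n : ℤ) (x : A) :
    bstar (n • u) x = n • bstar u x :=
  map_zsmul (AddMonoidHom.mk' (fun v : leftStarCenterTwo A ↦ bstar (v : A) x)
    fun v w ↦ add_bstar_of_forall_mem_starCenter v.2 w.2 x) n ⟨u, hu⟩

end SecondCenter

section ZetaTwo

variable {a : A}

theorem bstar_zsmul_add_of_mem_starCenter (x : A) (n : ℤ) {z : A} (hz : z ∈ starCenter A) :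
    bstar x (n • a + z) = n • bstar x a := by
  rw [bstar_add, bstar_zsmul, bstar_eq_zero_right hz, add_zero]

theorem zsmul_add_bstar_of_mem_starCenter (ha : ∀ x, bstar a x ∈ starCenter A) (n : ℤ) {z : A}
    (hz : z ∈ starCenter A) (x : A) : bstar (n • a + z) x = n • bstar a x := by
  rw [add_bstar_of_mem_starCenter hz, zsmul_bstar ha]

theorem zsmul_add_bstar_zsmul_add (ha : ∀ x, bstar a x ∈ starCenter A) (m m' : ℤ) {z z' : A}
    (hz : z ∈ starCenter A) (hz' : z' ∈ starCenter A) :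
    bstar (m • a + z) (m' • a + z') = (m * m') • bstar a a := by
  rw [bstar_zsmul_add_of_mem_starCenter _ _ hz', zsmul_add_bstar_of_mem_starCenter ha _ hz,
    mul_zsmul']

theorem zsmul_add_mul_zsmul_add (ha : ∀ x, bstar a x ∈ starCenter A) (m m' : ℤ) {z z' : A}
    (hz : z ∈ starCenter A) (hz' : z' ∈ starCenter A) :
    (m • a + z) * (m' • a + z') = (m + m') • a + (z + z' + (m * m') • bstar a a) := by
  rw [mul_eq_bstar_add_add, zsmul_add_bstar_zsmul_add ha m m' hz hz']
  module

theorem inv_zsmul_add (ha : ∀ x, bstar a x ∈ starCenter A) (m : ℤ) {z : A}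
    (hz : z ∈ starCenter A) : (m • a + z)⁻¹ = (-m) • a + (-z + (m * m) • bstar a a) := by
  have hz' : -z + (m * m) • bstar a a ∈ starCenter A :=
    (starCenterSubgroup A).add_mem ((starCenterSubgroup A).neg_mem hz)
      ((starCenterSubgroup A).zsmul_mem (ha a) _)
  refine inv_eq_of_mul_eq_one_right ?_
  rw [zsmul_add_mul_zsmul_add ha m (-m) hz hz', one_eq_zero]
  module

variable (a) in
def zmultiplesAdd (q : ℤ) (Z : AddSubgroup A) : Set A :=
  {w | ∃ k : ℤ, ∃ z ∈ Z, w = (k * q) • a + z}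

theorem isSubbrace_zmultiplesAdd (ha : ∀ x, bstar a x ∈ starCenter A) (q : ℤ)
    {Z : AddSubgroup A} (hZ : Z ≤ starCenterSubgroup A) (hb : q ^ 2 • bstar a a ∈ Z) :
    IsSubbrace (zmultiplesAdd a q Z) where
  zero_mem := ⟨0, 0, Z.zero_mem, by simp⟩
  add_mem := by
    rintro _ _ ⟨k, z, hz, rfl⟩ ⟨k', z', hz', rfl⟩
    exact ⟨k + k', z + z', Z.add_mem hz hz', by module⟩
  neg_mem := by
    rintro _ ⟨k, z, hz, rfl⟩
    exact ⟨-k, -z, Z.neg_mem hz, by module⟩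
  mul_mem := by
    rintro _ _ ⟨k, z, hz, rfl⟩ ⟨k', z', hz', rfl⟩
    refine ⟨k + k', z + z' + (k * k') • q ^ 2 • bstar a a,
      Z.add_mem (Z.add_mem hz hz') (Z.zsmul_mem hb _), ?_⟩
    rw [zsmul_add_mul_zsmul_add ha _ _ (hZ hz) (hZ hz')]
    module
  inv_mem := by
    rintro _ ⟨k, z, hz, rfl⟩
    refine ⟨-k, -z + (k * k) • q ^ 2 • bstar a a,
      Z.add_mem (Z.neg_mem hz) (Z.zsmul_mem hb _), ?_⟩
    rw [inv_zsmul_add ha _ (hZ hz)]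
    module

theorem isIdeal_zmultiplesAdd_starCenterSubgroup (haL : ∀ x, bstar a x ∈ starCenter A)
    (haR : ∀ x, bstar x a ∈ starCenter A) (q : ℤ) :
    IsIdeal (zmultiplesAdd a q (starCenterSubgroup A)) where
  subset := Set.subset_univ _
  subbrace := isSubbrace_zmultiplesAdd haL q le_rfl ((starCenterSubgroup A).zsmul_mem (haL a) _)
  ambient_subbrace := isSubbrace_univ
  star_mem_left := by
    rintro x - _ ⟨k, z, hz, rfl⟩
    refine ⟨0, (k * q) • bstar x a, (starCenterSubgroup A).zsmul_mem (haR x) _, ?_⟩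
    rw [bstar_zsmul_add_of_mem_starCenter x _ hz, zero_mul, zero_zsmul, zero_add]
  star_mem_right := by
    rintro x - _ ⟨k, z, hz, rfl⟩
    refine ⟨0, (k * q) • bstar a x, (starCenterSubgroup A).zsmul_mem (haL x) _, ?_⟩
    rw [zsmul_add_bstar_of_mem_starCenter haL _ hz, zero_mul, zero_zsmul, zero_add]

theorem isIdealIn_zmultiplesAdd (ha : ∀ x, bstar a x ∈ starCenter A) (q : ℤ) :
    IsIdealIn (zmultiplesAdd a q (AddSubgroup.zmultiples (q ^ 2 • bstar a a)))
      (zmultiplesAdd a q (starCenterSubgroup A)) := by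
  have hle : AddSubgroup.zmultiples (q ^ 2 • bstar a a) ≤ starCenterSubgroup A :=
    AddSubgroup.zmultiples_le_of_mem ((starCenterSubgroup A).zsmul_mem (ha a) _)
  refine ⟨?_, isSubbrace_zmultiplesAdd ha q hle (AddSubgroup.mem_zmultiples _),
    isSubbrace_zmultiplesAdd ha q le_rfl (hle (AddSubgroup.mem_zmultiples _)), ?_, ?_⟩
  · rintro _ ⟨k, z, hz, rfl⟩
    exact ⟨k, z, hle hz, rfl⟩
  · rintro _ ⟨l, z, hz, rfl⟩ _ ⟨k, w, hw, rfl⟩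
    refine ⟨0, (l * k) • q ^ 2 • bstar a a, zsmul_mem (AddSubgroup.mem_zmultiples _) _, ?_⟩
    rw [zsmul_add_bstar_zsmul_add ha _ _ hz (hle hw)]
    module
  · rintro _ ⟨l, z, hz, rfl⟩ _ ⟨k, w, hw, rfl⟩
    refine ⟨0, (l * k) • q ^ 2 • bstar a a, zsmul_mem (AddSubgroup.mem_zmultiples _) _, ?_⟩
    rw [zsmul_add_bstar_zsmul_add ha _ _ (hle hw) hz]
    module

theorem exists_zsmul_bstar_self_eq (hT : IsTBrace A) (haL : ∀ x, bstar a x ∈ starCenter A)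
    (haR : ∀ x, bstar x a ∈ starCenter A) (q : ℤ) :
    ∃ k n : ℤ, q • bstar a a = (k * q) • a + n • q ^ 2 • bstar a a := by
  have hI := hT _ _ (isIdealIn_zmultiplesAdd haL q)
    (isIdeal_zmultiplesAdd_starCenterSubgroup haL haR q)
  obtain ⟨k, _, hz, hk⟩ := hI.star_mem_left a trivial (q • a) ⟨1, 0, zero_mem _, by simp⟩
  obtain ⟨n, rfl⟩ := AddSubgroup.mem_zmultiples_iff.mp hz
  exact ⟨k, n, by rwa [bstar_zsmul] at hk⟩

theorem zsmul_bstar_self_eq_zero_of_zsmul_eq (hord : ¬IsOfFinAddOrder a)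
    (hab : bstar a (bstar a a) = 0) {r s : ℤ} (h : r • a = s • bstar a a) :
    s • bstar a a = 0 := by
  have hrb : r • bstar a a = 0 := by
    rw [← bstar_zsmul, h, bstar_zsmul, hab, smul_zero]
  have hr : r = 0 := by
    by_contra hr
    refine hord (isOfFinAddOrder_iff_zsmul_eq_zero.mpr ⟨r * r, mul_ne_zero hr hr, ?_⟩)
    rw [mul_zsmul, h, smul_comm, hrb, smul_zero]
  rw [← h, hr, zero_zsmul]

end ZetaTwo

end LeftBrace

theorem nsmul_eq_zero_of_isCoprime {G : Type*} [AddCommGroup G] {x : G} {p e : ℕ} {u : ℤ}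
    (hu : IsCoprime (p : ℤ) u) (he : p ^ e • x = 0) (hpu : ((p : ℤ) * u) • x = 0) :
    p • x = 0 := by
  obtain ⟨α, β, hαβ⟩ := hu.pow_left (m := e)
  have he' : ((p : ℤ) ^ e) • x = 0 := by exact_mod_cast he
  calc p • x = ((α * p ^ e + β * u) * p) • x := by rw [hαβ, one_mul, natCast_zsmul]
    _ = (α * p) • ((p : ℤ) ^ e • x) + β • (((p : ℤ) * u) • x) := by module
    _ = 0 := by rw [he', hpu, smul_zero, smul_zero, add_zero]

open LeftBrace in
/-- **Lemma.** Let `A` be a T-brace and `a ∈ ζ₂(⋆,A)` of infinite additive order.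
If the torsion subgroup of the additive group of `ζ(⋆,A)` is a `p`-group for some
prime `p`, then `a ⋆ a` has additive order at most `p`; in particular `p • (a ⋆ a) = 0`. -/
theorem addOrderOf_bstar_self_le_p
    {A : Type u} [LeftBrace A] (hT : IsTBrace A) (p : ℕ) (hp : p.Prime)
    (hpgrp : ∀ z ∈ starCenter A, IsOfFinAddOrder z → ∃ m : ℕ, p ^ m • z = 0)
    (a : A) (ha : a ∈ zetaNat A 2) (hord : ¬ IsOfFinAddOrder a) :
    addOrderOf (bstar a a) ≤ p ∧ p • bstar a a = 0 := by
  have haL : ∀ x, bstar a x ∈ starCenter A := fun x ↦ (ha x).1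
  have hb : bstar a a ∈ starCenter A := haL a
  obtain ⟨k, n, hkn⟩ := exists_zsmul_bstar_self_eq hT haL (fun x ↦ (ha x).2) p
  have hcop : IsCoprime (p : ℤ) (1 - n * p) := ⟨n, 1, by ring⟩
  have hs : ((p : ℤ) * (1 - n * p)) • bstar a a = 0 :=
    zsmul_bstar_self_eq_zero_of_zsmul_eq hord (bstar_eq_zero_right hb a) (r := k * p)
      (by linear_combination (norm := module) -hkn)
  have hu : 1 - n * p ≠ 0 := fun h ↦
    (Nat.prime_iff_prime_int.mp hp).not_isUnit (isCoprime_zero_right.mp (h ▸ hcop))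
  obtain ⟨e, he⟩ := hpgrp _ hb (isOfFinAddOrder_iff_zsmul_eq_zero.mpr
    ⟨_, mul_ne_zero (Int.natCast_ne_zero.mpr hp.ne_zero) hu, hs⟩)
  have hpb : p • bstar a a = 0 := nsmul_eq_zero_of_isCoprime hcop he hs
  exact ⟨Nat.le_of_dvd hp.pos (addOrderOf_dvd_of_nsmul_eq_zero hpb), hpb⟩
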